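/- Let G be the 9-cycle with vertices v_0,...,v_8 (labelled cyclically), S = {v_0, v_3}, A = {v_1, v_2, v_4, v_8} the set of neighbours of S, and B = {v_5, v_6, v_7} the non-neighbours of S. The Droogendijk graph G* built from these data has 18 vertices and chromatic number 3 (not 4). -/

import Mathlib

set_option linter.unreachableTactic false
set_option linter.unusedTactic false
set_option linter.unnecessarySeqFocus false

/-- The set `A` of neighbours of the independent set `S` in `G`. -/
def droogA {V : Type} (G : SimpleGraph V) (S : Set V) : Set V :=
  {v : V | v ∉ S ∧ ∃ w ∈ S, G.Adj v w}

/-- The set `B` of non-neighbours of `S` in `G` (outside `S`). -/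
def droogB {V : Type} (G : SimpleGraph V) (S : Set V) : Set V :=
  {v : V | v ∉ S ∧ ∀ w ∈ S, ¬ G.Adj v w}

/-- Vertex type of the Droogendijk graph `G*`: the original vertices, copies `A'` and `B'`
of `A` and `B`, and the two new vertices `α` (coded `false`) and `β` (coded `true`). -/
abbrev DroogVertex {V : Type} (G : SimpleGraph V) (S : Set V) : Type :=
  V ⊕ ((droogA G S ⊕ droogB G S) ⊕ Bool)

/-- The vertex `α` of `G*`. -/
def droogAlpha {V : Type} (G : SimpleGraph V) (S : Set V) : DroogVertex G S :=
  Sum.inr (Sum.inr false)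

/-- The vertex `β` of `G*`. -/
def droogBeta {V : Type} (G : SimpleGraph V) (S : Set V) : DroogVertex G S :=
  Sum.inr (Sum.inr true)

/-- Adjacency of the Droogendijk graph `G*`: `G` on the original vertices, each copy vertex
joined to the `G`-neighbours of its original, `α` joined to `S ∪ B'`, and `β` joined to
`A' ∪ B'`. -/
def droogAdj {V : Type} (G : SimpleGraph V) (S : Set V) :
    DroogVertex G S → DroogVertex G S → Prop
  | Sum.inl x, Sum.inl y => G.Adj x y
  | Sum.inl x, Sum.inr (Sum.inl (Sum.inl a)) => G.Adj x a.1
  | Sum.inr (Sum.inl (Sum.inl a)), Sum.inl x => G.Adj x a.1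
  | Sum.inl x, Sum.inr (Sum.inl (Sum.inr b)) => G.Adj x b.1
  | Sum.inr (Sum.inl (Sum.inr b)), Sum.inl x => G.Adj x b.1
  | Sum.inl x, Sum.inr (Sum.inr false) => x ∈ S
  | Sum.inr (Sum.inr false), Sum.inl x => x ∈ S
  | Sum.inr (Sum.inl (Sum.inl _)), Sum.inr (Sum.inr true) => True
  | Sum.inr (Sum.inr true), Sum.inr (Sum.inl (Sum.inl _)) => True
  | Sum.inr (Sum.inl (Sum.inr _)), Sum.inr (Sum.inr _) => True
  | Sum.inr (Sum.inr _), Sum.inr (Sum.inl (Sum.inr _)) => True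
  | _, _ => False

/-- The Droogendijk graph `G*` built from `G` and the independent set `S`. -/
def droog {V : Type} (G : SimpleGraph V) (S : Set V) : SimpleGraph (DroogVertex G S) where
  Adj := droogAdj G S
  symm := by
    constructor
    rintro (x | ((a | b) | (_ | _))) (y | ((a' | b') | (_ | _))) h <;>
      simp only [droogAdj] at h ⊢ <;> first | exact G.adj_symm h | exact h | trivial
  loopless := by
    constructor
    rintro (x | ((a | b) | (_ | _))) h <;> simp only [droogAdj] at h <;>
      first | exact G.irrefl h | exact h | exact h.elim

/-- The 9-cycle. -/
def C9 : SimpleGraph (Fin 9) where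
  Adj i j := j = i + 1 ∨ i = j + 1
  symm := by constructor; decide
  loopless := by constructor; decide

/-- The independent set `S = {v₀, v₃}` of the 9-cycle. -/
def S9 : Set (Fin 9) := {0, 3}

/-!
The 9-cycle is a subgraph of `G*`, so `χ(G*) ≥ χ(C₉) = 3`. Conversely a proper colouring `c`
of `G` extends to `G*`: each vertex of `A'` copies the colour of its original (it has the same
neighbours in `G`), and `α`, `β` and all of `B'` receive three colours `y`, `z`, `x` with
`x ∉ {y, z}`. This is proper as soon as `y` misses `c(S)`, `z` misses `c(A)` and `x` misses the
colours of the neighbours of `B`, and for the 9-cycle such a 3-colouring exists.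
-/

open SimpleGraph

section Droogendijk

variable {V : Type} (G : SimpleGraph V) (S : Set V)

instance [Fintype V] [DecidableRel G.Adj] [DecidablePred (· ∈ S)] :
    DecidablePred (· ∈ droogA G S) :=
  fun v => inferInstanceAs (Decidable (v ∉ S ∧ ∃ w ∈ S, G.Adj v w))

instance [Fintype V] [DecidableRel G.Adj] [DecidablePred (· ∈ S)] :
    DecidablePred (· ∈ droogB G S) :=
  fun v => inferInstanceAs (Decidable (v ∉ S ∧ ∀ w ∈ S, ¬ G.Adj v w))

theorem droogA_union_droogB : droogA G S ∪ droogB G S = Sᶜ := by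
  ext v
  simp only [droogA, droogB, Set.mem_union, Set.mem_ofPred_eq, Set.mem_compl_iff,
    ← and_or_left]
  exact and_iff_left ((em _).imp_right fun h w hw hvw => h ⟨w, hw, hvw⟩)

theorem disjoint_droogA_droogB : Disjoint (droogA G S) (droogB G S) :=
  Set.disjoint_left.2 fun _ ⟨_, w, hw, hvw⟩ ⟨_, h⟩ => h w hw hvw

theorem card_droogVertex_add_card [Finite V] :
    Nat.card (DroogVertex G S) + Nat.card S = 2 * Nat.card V + 2 := by
  have hAB : Nat.card (droogA G S ⊕ droogB G S) = Nat.card (Sᶜ : Set V) := by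
    rw [← droogA_union_droogB G S]
    classical exact Nat.card_congr (Equiv.Set.union (disjoint_droogA_droogB G S)).symm
  have hS : Nat.card S + Nat.card (Sᶜ : Set V) = Nat.card V := Set.ncard_add_ncard_compl S
  rw [Nat.card_sum, Nat.card_sum, hAB, Nat.card_eq_fintype_card (α := Bool), Fintype.card_bool]
  omega

def SimpleGraph.Hom.toDroog : G →g droog G S where
  toFun := Sum.inl
  map_rel' h := h

theorem chromaticNumber_le_chromaticNumber_droog :
    G.chromaticNumber ≤ (droog G S).chromaticNumber :=
  chromaticNumber_mono_of_hom (Hom.toDroog G S)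

variable {G S} {α : Type*}

def SimpleGraph.Coloring.droogExtend (c : G.Coloring α) (x y z : α) (hxy : x ≠ y)
    (hxz : x ≠ z) (hS : ∀ s ∈ S, c s ≠ y) (hA : ∀ a ∈ droogA G S, c a ≠ z)
    (hB : ∀ b ∈ droogB G S, ∀ v, G.Adj v b → c v ≠ x) : (droog G S).Coloring α :=
  Coloring.mk
    (fun
      | Sum.inl v => c v
      | Sum.inr (Sum.inl (Sum.inl a)) => c a
      | Sum.inr (Sum.inl (Sum.inr _)) => x
      | Sum.inr (Sum.inr false) => y
      | Sum.inr (Sum.inr true) => z)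
    (by
      rintro (u | ((a | b) | (_ | _))) (v | ((a | b) | (_ | _))) h <;>
        simp only [droog, droogAdj] at h <;>
        first
          | exact h.elim | exact c.valid h | exact (c.valid h).symm
          | exact hB _ b.2 _ h | exact (hB _ b.2 _ h).symm
          | exact hS _ h | exact (hS _ h).symm
          | exact hA _ a.2 | exact (hA _ a.2).symm
          | exact hxy | exact hxy.symm | exact hxz | exact hxz.symm)

end Droogendijk

instance : DecidablePred (· ∈ S9) := fun v => inferInstanceAs (Decidable (v = 0 ∨ v = 3))

instance : DecidableRel C9.Adj := fun i j => inferInstanceAs (Decidable (j = i + 1 ∨ i = j + 1))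

theorem C9_eq_cycleGraph : C9 = cycleGraph 9 := by
  ext i j
  revert i j
  decide

def C9.coloring : C9.Coloring (Fin 3) :=
  Coloring.mk ![0, 1, 2, 0, 2, 0, 2, 0, 2] (by decide)

theorem chromaticNumber_droog_C9 : (droog C9 S9).chromaticNumber = 3 := by
  refine le_antisymm (Colorable.chromaticNumber_le ⟨C9.coloring.droogExtend 1 2 0
    (by decide) (by decide) (by decide) (by decide) (by decide)⟩) ?_
  calc (3 : ℕ∞) = (cycleGraph 9).chromaticNumber :=
        (chromaticNumber_cycleGraph_of_odd 9 (by norm_num) (by decide)).symm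
    _ = C9.chromaticNumber := by rw [C9_eq_cycleGraph]
    _ ≤ (droog C9 S9).chromaticNumber := chromaticNumber_le_chromaticNumber_droog C9 S9

/-- For the 9-cycle `G` with `S = {v₀, v₃}` (so `A = {v₁, v₂, v₄, v₈}` and
`B = {v₅, v₆, v₇}`), the Droogendijk graph `G*` has 18 vertices and chromatic number 3
(not 4). -/
theorem stmt_10 :
    droogA C9 S9 = {1, 2, 4, 8} ∧ droogB C9 S9 = {5, 6, 7} ∧
    Nat.card (DroogVertex C9 S9) = 18 ∧
    (droog C9 S9).chromaticNumber = 3 ∧ (droog C9 S9).chromaticNumber ≠ 4 := by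
  have hS9 : Nat.card S9 = 2 := Set.ncard_pair (by decide)
  have hcard := card_droogVertex_add_card C9 S9
  rw [hS9, Nat.card_fin] at hcard
  refine ⟨?_, ?_, by omega, chromaticNumber_droog_C9, by rw [chromaticNumber_droog_C9]; decide⟩
  all_goals
    ext v
    simp only [Set.mem_insert_iff, Set.mem_singleton_iff]
    revert v
    decide
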